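/- arXiv:2210.08259 — 2 statements merged into one kernel-verified Lean document; each statement's English description precedes it below -/
import Mathlib

section
/- Assume: T > 0; d2, r2, b2 : ℝ → ℝ are continuous, positive, T-periodic; the kernel J2 : ℝ → ℝ is nonnegative, Lebesgue measurable, even (J2(x) = J2(−x)), satisfies ∫_ℝ J2(x) dx = 1 and ∫_ℝ J2(x)e^{−λx} dx < ∞ for every λ ∈ ℝ. Define γ2(μ) = (1/T)∫_0^T [d2(t)(∫_ℝ J2(y)e^{μy} dy − 1) + b2(t)q(t)] dt for μ > 0. Then inf_{0 < μ < ∞} γ2(μ)/μ > 0. -/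
open MeasureTheory Set Filter

noncomputable def p0c (r a : ℝ → ℝ) (T : ℝ) : ℝ :=
  (Real.exp (∫ s in (0:ℝ)..T, r s) - 1) /
    ∫ s in (0:ℝ)..T, Real.exp (∫ τ in (0:ℝ)..s, r τ) * a s

noncomputable def pfun (r a : ℝ → ℝ) (T t : ℝ) : ℝ :=
  p0c r a T * Real.exp (∫ s in (0:ℝ)..t, r s) /
    (1 + p0c r a T * ∫ s in (0:ℝ)..t, Real.exp (∫ τ in (0:ℝ)..s, r τ) * a s)

/-!
Since `J2` is even, `∫ J2 y e^{μy} dy = ∫ J2 y cosh (μy) dy ≥ 1 + σ μ² / 4` with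
`σ = ∫ J2 y y² dy > 0`, so `γ2 μ ≥ a μ² + b` with `a, b > 0`; here `b > 0` because the
periodic solution `q` is positive. By AM-GM, `γ2 μ / μ ≥ a μ + b / μ ≥ 2 √(a b)`.
-/

open Real

lemma two_add_sq_div_two_le_exp_add_exp_neg (x : ℝ) : 2 + x ^ 2 / 2 ≤ exp x + exp (-x) := by
  rcases le_total 0 x with hx | hx
  · linarith [quadratic_le_exp_of_nonneg hx, add_one_le_exp (-x)]
  · have h := quadratic_le_exp_of_nonneg (neg_nonneg.2 hx)
    rw [neg_sq] at h
    linarith [add_one_le_exp x]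

lemma sInf_div_pos_of_quadratic_le {g : ℝ → ℝ} {a b : ℝ} (ha : 0 < a) (hb : 0 < b)
    (hg : ∀ μ > 0, a * μ ^ 2 + b ≤ g μ) : 0 < sInf ((fun μ => g μ / μ) '' Ioi 0) := by
  have hab : 0 < √(a * b) := sqrt_pos.2 (mul_pos ha hb)
  refine (mul_pos two_pos hab).trans_le (le_csInf ⟨_, 1, mem_Ioi.2 one_pos, rfl⟩ ?_)
  rintro _ ⟨μ, hμ : 0 < μ, rfl⟩
  rw [le_div_iff₀ hμ]
  have amgm : 0 ≤ (√a * μ - √b) ^ 2 := sq_nonneg _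
  have hsplit : √(a * b) = √a * √b := sqrt_mul ha.le b
  nlinarith [sq_sqrt ha.le, sq_sqrt hb.le, hg μ hμ]

section Kernel

variable {J : ℝ → ℝ}

lemma integrable_mul_sq_of_integrable_mul_exp (hJ : ∀ x, 0 ≤ J x)
    (hexp : ∀ l : ℝ, Integrable fun x => J x * exp (l * x)) :
    Integrable fun y => J y * y ^ 2 := by
  have hJi : Integrable J := by simpa using hexp 0
  refine Integrable.mono' (((hexp 1).add (hexp (-1))).const_mul 2)
    (hJi.aestronglyMeasurable.mul (continuous_pow 2).aestronglyMeasurable) ?_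
  refine Eventually.of_forall fun y => ?_
  have h := mul_le_mul_of_nonneg_left (two_add_sq_div_two_le_exp_add_exp_neg y) (hJ y)
  rw [norm_of_nonneg (mul_nonneg (hJ y) (sq_nonneg y))]
  simp only [Pi.add_apply, one_mul, neg_one_mul]
  nlinarith [hJ y]

lemma integral_mul_sq_pos (hJ : ∀ x, 0 ≤ J x) (hJ0 : ∫ x, J x ≠ 0)
    (hint : Integrable fun y => J y * y ^ 2) : 0 < ∫ y, J y * y ^ 2 := by
  have hnn : 0 ≤ fun y => J y * y ^ 2 := fun y => mul_nonneg (hJ y) (sq_nonneg y)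
  refine (integral_nonneg hnn).lt_of_ne fun h => hJ0 ?_
  have hz := (integral_eq_zero_iff_of_nonneg hnn hint).1 h.symm
  have hJz : J =ᵐ[volume] 0 := by
    filter_upwards [hz, compl_mem_ae_iff.2 (measure_singleton (0 : ℝ))] with y hy (hy0 : y ≠ 0)
    simpa [hy0] using hy
  simp [integral_congr_ae hJz]

lemma one_add_le_integral_mul_exp (hJ : ∀ x, 0 ≤ J x) (hJ1 : ∫ x, J x = 1)
    (heven : ∀ x, J x = J (-x)) (hexp : ∀ l : ℝ, Integrable fun x => J x * exp (l * x))
    (μ : ℝ) : 1 + μ ^ 2 / 4 * ∫ y, J y * y ^ 2 ≤ ∫ y, J y * exp (μ * y) := by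
  have hJi : Integrable J := by simpa using hexp 0
  have hsq := integrable_mul_sq_of_integrable_mul_exp hJ hexp
  have hsym : ∫ y, J y * exp (-μ * y) = ∫ y, J y * exp (μ * y) := by
    rw [← integral_neg_eq_self]
    simp only [← heven, neg_mul, mul_neg, neg_neg]
  have hlower : ∫ y, (2 * J y + μ ^ 2 / 2 * (J y * y ^ 2))
      ≤ ∫ y, (J y * exp (μ * y) + J y * exp (-μ * y)) := by
    refine integral_mono ((hJi.const_mul 2).add (hsq.const_mul _)) ((hexp μ).add (hexp (-μ)))
      fun y => ?_
    have h := mul_le_mul_of_nonneg_left (two_add_sq_div_two_le_exp_add_exp_neg (μ * y)) (hJ y)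
    simp only [neg_mul] at h ⊢
    linarith
  rw [integral_add (hJi.const_mul 2) (hsq.const_mul _), integral_const_mul, integral_const_mul,
    integral_add (hexp μ) (hexp (-μ)), hsym, hJ1] at hlower
  linarith

end Kernel

section Logistic

variable {r a : ℝ → ℝ} {T : ℝ}

lemma continuous_primitive {f : ℝ → ℝ} (hf : Continuous f) :
    Continuous fun t => ∫ s in (0:ℝ)..t, f s :=
  intervalIntegral.continuous_primitive (fun _ _ => hf.intervalIntegrable _ _) 0

lemma p0c_pos (hr : Continuous r) (hr0 : ∀ t, 0 < r t) (ha : Continuous a)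
    (ha0 : ∀ t, 0 < a t) (hT : 0 < T) : 0 < p0c r a T := by
  have hR : 0 < ∫ s in (0:ℝ)..T, r s :=
    intervalIntegral.intervalIntegral_pos_of_pos (hr.intervalIntegrable 0 T) hr0 hT
  refine div_pos (by linarith [add_one_lt_exp hR.ne']) ?_
  exact intervalIntegral.intervalIntegral_pos_of_pos
    (((continuous_exp.comp (continuous_primitive hr)).mul ha).intervalIntegrable 0 T)
    (fun s => mul_pos (exp_pos _) (ha0 s)) hT

lemma pfun_denom_pos (hp : 0 < p0c r a T) (ha0 : ∀ t, 0 < a t) {t : ℝ} (ht : 0 ≤ t) :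
    0 < 1 + p0c r a T * ∫ s in (0:ℝ)..t, exp (∫ τ in (0:ℝ)..s, r τ) * a s := by
  have : 0 ≤ ∫ s in (0:ℝ)..t, exp (∫ τ in (0:ℝ)..s, r τ) * a s :=
    intervalIntegral.integral_nonneg ht fun s _ => (mul_pos (exp_pos _) (ha0 s)).le
  linarith [mul_nonneg hp.le this]

lemma pfun_pos (hp : 0 < p0c r a T) (ha0 : ∀ t, 0 < a t) {t : ℝ} (ht : 0 ≤ t) :
    0 < pfun r a T t :=
  div_pos (mul_pos hp (exp_pos _)) (pfun_denom_pos hp ha0 ht)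

lemma continuousOn_pfun (hr : Continuous r) (ha : Continuous a) (hp : 0 < p0c r a T)
    (ha0 : ∀ t, 0 < a t) : ContinuousOn (pfun r a T) (Ici 0) := by
  have hE := continuous_exp.comp (continuous_primitive hr)
  refine ContinuousOn.div (by fun_prop) ?_ fun t ht => (pfun_denom_pos hp ha0 ht).ne'
  exact (continuous_const.add (continuous_const.mul
    (continuous_primitive (hE.mul ha)))).continuousOn

end Logistic

theorem stmt4 (T : ℝ) (hT : 0 < T) (d2 r2 b2 J2 : ℝ → ℝ)
    (hd2 : Continuous d2 ∧ (∀ t, 0 < d2 t) ∧ ∀ t, d2 (t + T) = d2 t)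
    (hr2 : Continuous r2 ∧ (∀ t, 0 < r2 t) ∧ ∀ t, r2 (t + T) = r2 t)
    (hb2 : Continuous b2 ∧ (∀ t, 0 < b2 t) ∧ ∀ t, b2 (t + T) = b2 t)
    (hJ2 : Measurable J2 ∧ (∀ x, 0 ≤ J2 x) ∧ (∫ x, J2 x) = 1 ∧
      ∀ l : ℝ, Integrable fun x => J2 x * Real.exp (-l * x))
    (hJ2even : ∀ x, J2 x = J2 (-x))
    :
    0 < sInf ((fun μ : ℝ =>
      ((1 / T) * ∫ t in (0:ℝ)..T,
        (d2 t * ((∫ y, J2 y * Real.exp (μ * y)) - 1) + b2 t * pfun r2 b2 T t)) / μ)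
      '' Set.Ioi 0) := by
  obtain ⟨hdc, hd0, -⟩ := hd2
  obtain ⟨hrc, hr0, -⟩ := hr2
  obtain ⟨hbc, hb0, -⟩ := hb2
  obtain ⟨-, hJ0, hJ1, hexp⟩ := hJ2
  replace hexp : ∀ l : ℝ, Integrable fun x => J2 x * exp (l * x) := fun l => by
    simpa using hexp (-l)
  have hp := p0c_pos hrc hr0 hbc hb0 hT
  have hBi : IntervalIntegrable (fun t => b2 t * pfun r2 b2 T t) volume 0 T :=
    (hbc.continuousOn.mul ((continuousOn_pfun hrc hbc hp hb0).mono Icc_subset_Ici_self)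
      ).intervalIntegrable_of_Icc hT.le
  set A := ∫ t in (0:ℝ)..T, d2 t
  set B := ∫ t in (0:ℝ)..T, b2 t * pfun r2 b2 T t
  set σ := ∫ y, J2 y * y ^ 2
  have hA : 0 < A :=
    intervalIntegral.intervalIntegral_pos_of_pos (hdc.intervalIntegrable 0 T) hd0 hT
  have hB : 0 < B := intervalIntegral.intervalIntegral_pos_of_pos_on hBi
    (fun t ht => mul_pos (hb0 t) (pfun_pos hp hb0 ht.1.le)) hT
  have hσ : 0 < σ := integral_mul_sq_pos hJ0 (by simp [hJ1])
    (integrable_mul_sq_of_integrable_mul_exp hJ0 hexp)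
  refine sInf_div_pos_of_quadratic_le (a := σ * A / (4 * T)) (b := B / T) (by positivity)
    (by positivity) fun μ _ => ?_
  have hM := one_add_le_integral_mul_exp hJ0 hJ1 hJ2even hexp μ
  set M := ∫ y, J2 y * exp (μ * y)
  have hsplit :
      ∫ t in (0:ℝ)..T, (d2 t * (M - 1) + b2 t * pfun r2 b2 T t) = (M - 1) * A + B := by
    rw [intervalIntegral.integral_add (f := fun t => d2 t * (M - 1))
      ((hdc.mul continuous_const).intervalIntegrable 0 T) hBi, intervalIntegral.integral_mul_const]
    ring
  calc σ * A / (4 * T) * μ ^ 2 + B / T = (1 / T) * (μ ^ 2 / 4 * σ * A + B) := by ring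
    _ ≤ (1 / T) * ((M - 1) * A + B) := by gcongr; linarith
    _ = _ := by rw [hsplit]
end

section
/- Assume: T > 0; d2, r1, r2, a1, a2, b1, b2 : ℝ → ℝ are continuous, positive, T-periodic; the kernel J2 is nonnegative, Lebesgue measurable, even (J2(x) = J2(−x)), satisfies ∫_ℝ J2(x) dx = 1 and ∫_ℝ J2(x)e^{−λx} dx < ∞ for every λ ∈ ℝ; and the bistability condition (A2) holds: ∫_0^T (a1(t)p(t) − b1(t)q(t)) dt < 0 and ∫_0^T (b2(t)q(t) − a2(t)p(t)) dt < 0. Define I2(μ, c) = ∫_0^T [d2(t)(∫_ℝ J2(y)e^{μy} dy − 1) + cμ + b2(t)q(t) − a2(t)p(t)] dt. Then for every c ∈ ℝ: the function μ ↦ I2(μ, c) is convex on [0, ∞), I2(0, c) < 0, and there exists exactly one μ > 0 with I2(μ, c) = 0. -/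
open MeasureTheory Set Filter

/-!
Integrating in time, `I₂(μ, c) = D (M(μ) - 1) + c T μ + G` with `D = ∫₀ᵀ d₂ > 0`,
`G = ∫₀ᵀ (b₂ q - a₂ p) < 0` (the second half of (A2)) and `M(μ) = ∫ J₂(y) e^{μ y} dy`.
`M` is convex, being an average of exponentials, and `M(0) = 1`, so `I₂(·, c)` is convex and
equals `G < 0` at `0`. Since `J₂` is even with mass `1`, it charges some half-line `(δ, ∞)`
with `δ > 0`, so `M(μ)` grows like `e^{δ μ}` and `I₂(μ, c) → ∞`. The intermediate value theorem
gives a positive root, and a convex function that is negative at `0` vanishes at most once on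
`(0, ∞)`.
-/

open Real

theorem setIntegral_Ioi_zero_of_even {f : ℝ → ℝ} (hf : Integrable f) (heven : ∀ x, f x = f (-x)) :
    ∫ x in Ioi 0, f x = (∫ x, f x) / 2 := by
  have hsymm : ∫ x in Ioi (0 : ℝ), f x = ∫ x in Iic 0, f x := by
    simpa only [neg_zero, ← heven] using integral_comp_neg_Ioi 0 f
  have := intervalIntegral.integral_Iic_add_Ioi (b := 0) hf.integrableOn hf.integrableOn
  linarith

theorem exists_gt_and_setIntegral_Ioi_pos {f : ℝ → ℝ} {a : ℝ} (hf : IntegrableOn f (Ioi a))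
    (h : 0 < ∫ x in Ioi a, f x) : ∃ b, a < b ∧ 0 < ∫ x in Ioi b, f x := by
  have hmono : Monotone fun n : ℕ => Ioi (a + 1 / (n + 1 : ℝ)) := fun m n hmn =>
    Ioi_subset_Ioi (by gcongr)
  have hunion : ⋃ n : ℕ, Ioi (a + 1 / (n + 1 : ℝ)) = Ioi a := by
    ext x
    simp only [mem_iUnion, mem_Ioi]
    refine ⟨fun ⟨n, hn⟩ => lt_trans (lt_add_of_pos_right a (by positivity)) hn, fun hx => ?_⟩
    obtain ⟨n, hn⟩ := exists_nat_one_div_lt (sub_pos.mpr hx)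
    exact ⟨n, by linarith⟩
  have htend := tendsto_setIntegral_of_monotone (fun _ => measurableSet_Ioi) hmono (hunion ▸ hf)
  rw [hunion] at htend
  obtain ⟨n, hn⟩ := (htend.eventually (eventually_gt_nhds h)).exists
  exact ⟨_, lt_add_of_pos_right a (by positivity), hn⟩

theorem tendsto_mul_exp_add_mul_add_atTop {a δ : ℝ} (ha : 0 < a) (hδ : 0 < δ) (k e : ℝ) :
    Tendsto (fun x => a * exp (δ * x) + k * x + e) atTop atTop := by
  have hratio : Tendsto (fun x => a * (exp (δ * x) / x) + k) atTop atTop := by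
    refine tendsto_atTop_add_const_right _ k (Tendsto.const_mul_atTop ha ?_)
    simpa using tendsto_exp_mul_div_rpow_atTop 1 δ hδ
  refine tendsto_atTop_add_const_right _ e ((tendsto_id.atTop_mul_atTop₀ hratio).congr' ?_)
  filter_upwards [eventually_ne_atTop 0] with x hx
  simp only [id]
  field_simp

theorem ConvexOn.pos_of_lt_of_eq_zero {f : ℝ → ℝ} (hf : ConvexOn ℝ (Ici 0) f) (h0 : f 0 < 0)
    {s t : ℝ} (hs : 0 < s) (hfs : f s = 0) (hst : s < t) : 0 < f t := by
  have hslope := hf.slope_mono_adjacent self_mem_Ici (hs.trans hst).le hs hst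
  rw [hfs, sub_zero, sub_zero, zero_sub] at hslope
  have : 0 < f t / (t - s) := (div_pos (neg_pos.mpr h0) hs).trans_le hslope
  exact (div_pos_iff_of_pos_right (sub_pos.mpr hst)).mp this

theorem ConvexOn.existsUnique_pos_eq_zero {f : ℝ → ℝ} (hf : ConvexOn ℝ (Ici 0) f)
    (hcont : ContinuousOn f (Ici 0)) (h0 : f 0 < 0) (htop : Tendsto f atTop atTop) :
    ∃! x, 0 < x ∧ f x = 0 := by
  obtain ⟨B, hfB, hB⟩ := ((htop.eventually_gt_atTop 0).and (eventually_gt_atTop 0)).exists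
  obtain ⟨x, hx, hfx⟩ :=
    intermediate_value_Ioo hB.le (hcont.mono Icc_subset_Ici_self) ⟨h0, hfB⟩
  refine ⟨x, ⟨hx.1, hfx⟩, fun y ⟨hy, hfy⟩ => ?_⟩
  rcases lt_trichotomy y x with hyx | rfl | hxy
  · exact absurd hfx (hf.pos_of_lt_of_eq_zero h0 hy hfy hyx).ne'
  · rfl
  · exact absurd hfy (hf.pos_of_lt_of_eq_zero h0 hx.1 hfx hxy).ne'

theorem intervalIntegral.integral_mul_const_add_const_add {d g : ℝ → ℝ} {a b : ℝ}
    (hd : IntervalIntegrable d volume a b) (hg : IntervalIntegrable g volume a b) (K k : ℝ) :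
    ∫ t in a..b, (d t * K + k + g t) = (∫ t in a..b, d t) * K + (b - a) * k + ∫ t in a..b, g t := by
  rw [integral_add ((hd.mul_const K).add intervalIntegrable_const) hg,
    integral_add (hd.mul_const K) intervalIntegrable_const, integral_mul_const, integral_const,
    smul_eq_mul]

theorem convexOn_integral_mul_exp {J : ℝ → ℝ} (hJ_nonneg : ∀ x, 0 ≤ J x)
    (hJ : ∀ μ : ℝ, Integrable fun y => J y * exp (μ * y)) :
    ConvexOn ℝ univ fun μ : ℝ => ∫ y, J y * exp (μ * y) := by
  refine ⟨convex_univ, fun μ _ ν _ a b ha hb hab => ?_⟩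
  simp only [smul_eq_mul]
  calc ∫ y, J y * exp ((a * μ + b * ν) * y)
      ≤ ∫ y, (a * (J y * exp (μ * y)) + b * (J y * exp (ν * y))) := by
        refine integral_mono (hJ _) (((hJ μ).const_mul a).add ((hJ ν).const_mul b)) fun y => ?_
        have hexp := convexOn_exp.2 (mem_univ (μ * y)) (mem_univ (ν * y)) ha hb hab
        simp only [smul_eq_mul] at hexp
        calc J y * exp ((a * μ + b * ν) * y)
            = J y * exp (a * (μ * y) + b * (ν * y)) := by ring_nf
          _ ≤ J y * (a * exp (μ * y) + b * exp (ν * y)) := by gcongr; exact hJ_nonneg y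
          _ = a * (J y * exp (μ * y)) + b * (J y * exp (ν * y)) := by ring
    _ = a * (∫ y, J y * exp (μ * y)) + b * ∫ y, J y * exp (ν * y) := by
        rw [integral_add ((hJ μ).const_mul a) ((hJ ν).const_mul b), integral_const_mul,
          integral_const_mul]

theorem exp_mul_mul_setIntegral_Ioi_le_integral_mul_exp {J : ℝ → ℝ} (hJ_nonneg : ∀ x, 0 ≤ J x)
    (hJ : ∀ μ : ℝ, Integrable fun y => J y * exp (μ * y)) (δ : ℝ) {μ : ℝ} (hμ : 0 ≤ μ) :
    exp (μ * δ) * ∫ x in Ioi δ, J x ≤ ∫ y, J y * exp (μ * y) := by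
  have hJ_int : Integrable J := by simpa using hJ 0
  calc exp (μ * δ) * ∫ x in Ioi δ, J x
      = ∫ x in Ioi δ, J x * exp (μ * δ) := by rw [mul_comm, integral_mul_const]
    _ ≤ ∫ x in Ioi δ, J x * exp (μ * x) := by
        refine setIntegral_mono_on (hJ_int.integrableOn.mul_const _) (hJ μ).integrableOn
          measurableSet_Ioi fun x hx => ?_
        gcongr
        · exact hJ_nonneg x
        · exact le_of_lt hx
    _ ≤ ∫ y, J y * exp (μ * y) :=
        setIntegral_le_integral (hJ μ) (Eventually.of_forall fun x =>
          mul_nonneg (hJ_nonneg x) (exp_nonneg _))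

theorem tendsto_mul_integral_mul_exp_add_atTop {J : ℝ → ℝ} (hJ_nonneg : ∀ x, 0 ≤ J x)
    (hJ : ∀ μ : ℝ, Integrable fun y => J y * exp (μ * y)) {δ : ℝ} (hδ : 0 < δ)
    (hmass : 0 < ∫ x in Ioi δ, J x) {D : ℝ} (hD : 0 < D) (k e : ℝ) :
    Tendsto (fun μ => D * (∫ y, J y * exp (μ * y)) + k * μ + e) atTop atTop := by
  refine tendsto_atTop_mono' _ ?_
    (tendsto_mul_exp_add_mul_add_atTop (mul_pos hD hmass) hδ k e)
  filter_upwards [eventually_ge_atTop 0] with μ hμ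
  have := exp_mul_mul_setIntegral_Ioi_le_integral_mul_exp hJ_nonneg hJ δ hμ
  rw [mul_comm δ μ]
  linarith [mul_le_mul_of_nonneg_left this hD.le]

theorem stmt16_general (T : ℝ) (hT : 0 < T) (d2 r1 r2 a1 a2 b1 b2 J2 : ℝ → ℝ)
    (hd2 : Continuous d2 ∧ (∀ t, 0 < d2 t) ∧ ∀ t, d2 (t + T) = d2 t)
    (hJ2 : Measurable J2 ∧ (∀ x, 0 ≤ J2 x) ∧ (∫ x, J2 x) = 1 ∧
      ∀ l : ℝ, Integrable fun x => J2 x * Real.exp (-l * x))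
    (hJ2even : ∀ x, J2 x = J2 (-x))
    (hA2 : (∫ t in (0:ℝ)..T, (a1 t * pfun r1 a1 T t - b1 t * pfun r2 b2 T t)) < 0 ∧
      (∫ t in (0:ℝ)..T, (b2 t * pfun r2 b2 T t - a2 t * pfun r1 a1 T t)) < 0)
    :
    ∀ c : ℝ,
      ConvexOn ℝ (Set.Ici 0) (fun μ : ℝ => ∫ t in (0:ℝ)..T,
        (d2 t * ((∫ y, J2 y * Real.exp (μ * y)) - 1) + c * μ +
          b2 t * pfun r2 b2 T t - a2 t * pfun r1 a1 T t)) ∧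
      (∫ t in (0:ℝ)..T,
        (d2 t * ((∫ y, J2 y * Real.exp ((0:ℝ) * y)) - 1) + c * 0 +
          b2 t * pfun r2 b2 T t - a2 t * pfun r1 a1 T t)) < 0 ∧
      ∃! μ : ℝ, 0 < μ ∧ (∫ t in (0:ℝ)..T,
        (d2 t * ((∫ y, J2 y * Real.exp (μ * y)) - 1) + c * μ +
          b2 t * pfun r2 b2 T t - a2 t * pfun r1 a1 T t)) = 0 := by
  obtain ⟨hd2_cont, hd2_pos, -⟩ := hd2
  obtain ⟨-, hJ_nonneg, hJ_mass, hJ_exp⟩ := hJ2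
  have hJ : ∀ μ : ℝ, Integrable fun y => J2 y * exp (μ * y) := fun μ => by
    simpa using hJ_exp (-μ)
  have hJ_int : Integrable J2 := by simpa using hJ_exp 0
  obtain ⟨δ, hδ, hmass⟩ : ∃ δ, 0 < δ ∧ 0 < ∫ x in Ioi δ, J2 x :=
    exists_gt_and_setIntegral_Ioi_pos hJ_int.integrableOn
      (by rw [setIntegral_Ioi_zero_of_even hJ_int hJ2even, hJ_mass]; norm_num)
  set D := ∫ t in (0:ℝ)..T, d2 t
  set G := ∫ t in (0:ℝ)..T, (b2 t * pfun r2 b2 T t - a2 t * pfun r1 a1 T t)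
  have hD : 0 < D :=
    intervalIntegral.intervalIntegral_pos_of_pos (hd2_cont.intervalIntegrable 0 T) hd2_pos hT
  intro c
  set F : ℝ → ℝ := fun μ => D * (∫ y, J2 y * exp (μ * y)) + c * T * μ + (G - D)
  have hrep : ∀ μ : ℝ, (∫ t in (0:ℝ)..T,
      (d2 t * ((∫ y, J2 y * Real.exp (μ * y)) - 1) + c * μ +
        b2 t * pfun r2 b2 T t - a2 t * pfun r1 a1 T t)) = F μ := fun μ => by
    simp only [add_sub_assoc]
    rw [intervalIntegral.integral_mul_const_add_const_add (hd2_cont.intervalIntegrable 0 T)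
      (intervalIntegral.intervalIntegrable_of_integral_ne_zero hA2.2.ne)]
    ring
  have hF : ConvexOn ℝ univ F :=
    (((convexOn_integral_mul_exp hJ_nonneg hJ).smul hD.le).add
      ((LinearMap.mul ℝ ℝ (c * T)).convexOn convex_univ)).add_const (G - D)
  have hF_Ici : ConvexOn ℝ (Ici 0) F := hF.subset (subset_univ _) (convex_Ici 0)
  have hF0 : F 0 = G := by simp [F, hJ_mass]
  refine ⟨hF_Ici.congr fun μ _ => (hrep μ).symm, (hrep 0).trans_lt (hF0.trans_lt hA2.2), ?_⟩
  simp only [hrep]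
  exact hF_Ici.existsUnique_pos_eq_zero ((hF.continuousOn isOpen_univ).mono (subset_univ _))
    (hF0.trans_lt hA2.2) (tendsto_mul_integral_mul_exp_add_atTop hJ_nonneg hJ hδ hmass hD _ _)

theorem stmt16 (T : ℝ) (hT : 0 < T) (d2 r1 r2 a1 a2 b1 b2 J2 : ℝ → ℝ)
    (hd2 : Continuous d2 ∧ (∀ t, 0 < d2 t) ∧ ∀ t, d2 (t + T) = d2 t)
    (hr1 : Continuous r1 ∧ (∀ t, 0 < r1 t) ∧ ∀ t, r1 (t + T) = r1 t)
    (hr2 : Continuous r2 ∧ (∀ t, 0 < r2 t) ∧ ∀ t, r2 (t + T) = r2 t)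
    (ha1 : Continuous a1 ∧ (∀ t, 0 < a1 t) ∧ ∀ t, a1 (t + T) = a1 t)
    (ha2 : Continuous a2 ∧ (∀ t, 0 < a2 t) ∧ ∀ t, a2 (t + T) = a2 t)
    (hb1 : Continuous b1 ∧ (∀ t, 0 < b1 t) ∧ ∀ t, b1 (t + T) = b1 t)
    (hb2 : Continuous b2 ∧ (∀ t, 0 < b2 t) ∧ ∀ t, b2 (t + T) = b2 t)
    (hJ2 : Measurable J2 ∧ (∀ x, 0 ≤ J2 x) ∧ (∫ x, J2 x) = 1 ∧
      ∀ l : ℝ, Integrable fun x => J2 x * Real.exp (-l * x))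
    (hJ2even : ∀ x, J2 x = J2 (-x))
    (hA2 : (∫ t in (0:ℝ)..T, (a1 t * pfun r1 a1 T t - b1 t * pfun r2 b2 T t)) < 0 ∧
      (∫ t in (0:ℝ)..T, (b2 t * pfun r2 b2 T t - a2 t * pfun r1 a1 T t)) < 0)
    :
    ∀ c : ℝ,
      ConvexOn ℝ (Set.Ici 0) (fun μ : ℝ => ∫ t in (0:ℝ)..T,
        (d2 t * ((∫ y, J2 y * Real.exp (μ * y)) - 1) + c * μ +
          b2 t * pfun r2 b2 T t - a2 t * pfun r1 a1 T t)) ∧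
      (∫ t in (0:ℝ)..T,
        (d2 t * ((∫ y, J2 y * Real.exp ((0:ℝ) * y)) - 1) + c * 0 +
          b2 t * pfun r2 b2 T t - a2 t * pfun r1 a1 T t)) < 0 ∧
      ∃! μ : ℝ, 0 < μ ∧ (∫ t in (0:ℝ)..T,
        (d2 t * ((∫ y, J2 y * Real.exp (μ * y)) - 1) + c * μ +
          b2 t * pfun r2 b2 T t - a2 t * pfun r1 a1 T t)) = 0 :=
  stmt16_general T hT d2 r1 r2 a1 a2 b1 b2 J2 hd2 hJ2 hJ2even hA2
end
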